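/- If w ∈ B_{p₀}(𝔻) for some 1 < p₀ < ∞, then for all Carleson boxes Q and all p ≥ p₀, ∫_Q (1/w)^{1/(p-1)} ≤ [w]_{p₀}^{1/(p₀-1)} ∫_Q (1/m_Q w)^{1/(p-1)}, i.e. w satisfies condition (mL^p) with constant [w]_{p₀}^{1/(p₀-1)}. -/

import Mathlib

open MeasureTheory Set
open scoped ENNReal NNReal

noncomputable section

/-- The open unit disc in `ℂ`. -/
def unitDisc : Set ℂ := {z : ℂ | ‖z‖ < 1}

/-- The Carleson box of the arc of the unit circle starting at angle `a`
(measured in full turns) and of (normalized) length `ℓ`: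
`Q_I = { z ∈ 𝔻 : z/|z| ∈ I, 1-|I| < |z| < 1 }`. -/
def box (a ℓ : ℝ) : Set ℂ :=
  {z : ℂ | 1 - ℓ < ‖z‖ ∧ ‖z‖ < 1 ∧
    ∃ θ ∈ Set.Ico a (a + ℓ),
      z = ((‖z‖ : ℝ) : ℂ) * Complex.exp (2 * Real.pi * θ * Complex.I)}

/-- The dyadic subarc of generation `k`, position `j`, of the arc `[a, a+ℓ)`,
viewed as an interval of angles. -/
def dyadicArc (a ℓ : ℝ) (k j : ℕ) : Set ℝ :=
  Set.Ico (a + j * ℓ / 2 ^ k) (a + (j + 1) * ℓ / 2 ^ k)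

/-- The Carleson box of the dyadic subarc of generation `k`, position `j`. -/
def dyadicBox (a ℓ : ℝ) (k j : ℕ) : Set ℂ :=
  box (a + j * ℓ / 2 ^ k) (ℓ / 2 ^ k)

/-- `∫_S w` (of the nonnegative part of `w`), as an extended nonnegative real. -/
def wInt (w : ℂ → ℝ) (S : Set ℂ) : ℝ≥0∞ :=
  ∫⁻ x in S, ENNReal.ofReal (w x)

/-- `ℝ≥0∞`-valued average of `w` over `S` (Lebesgue measure). -/
def avgE (w : ℂ → ℝ) (S : Set ℂ) : ℝ≥0∞ := wInt w S / volume S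

/-- Real-valued average of `f` over `S` (Lebesgue measure). -/
def avgR (f : ℂ → ℝ) (S : Set ℂ) : ℝ := (∫ x in S, f x) / (volume S).toReal

/-- `ℝ≥0∞`-valued `μ`-average of `f` over `S`. -/
def muAvg (μ : Measure ℂ) (f : ℂ → ℝ) (S : Set ℂ) : ℝ≥0∞ :=
  (∫⁻ y in S, ENNReal.ofReal (f y) ∂μ) / μ S

/-- The dyadic maximal function of `w` relative to the Carleson box `box a ℓ`. -/
def dyadicMaxE (a ℓ : ℝ) (w : ℂ → ℝ) (x : ℂ) : ℝ≥0∞ :=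
  ⨆ (k : ℕ) (j : ℕ) (_ : j < 2 ^ k) (_ : x ∈ dyadicBox a ℓ k j),
    avgE w (dyadicBox a ℓ k j)

/-- The dyadic minimal function of `w` relative to the Carleson box `box a ℓ`. -/
def dyadicMinE (a ℓ : ℝ) (w : ℂ → ℝ) (x : ℂ) : ℝ≥0∞ :=
  ⨅ (k : ℕ) (j : ℕ) (_ : j < 2 ^ k) (_ : x ∈ dyadicBox a ℓ k j),
    avgE w (dyadicBox a ℓ k j)

/-- The real-valued dyadic minimal function of `w` relative to `box a ℓ`. -/
def dyadicMinR (a ℓ : ℝ) (w : ℂ → ℝ) (x : ℂ) : ℝ :=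
  sInf {t : ℝ | ∃ k j : ℕ, j < 2 ^ k ∧ x ∈ dyadicBox a ℓ k j ∧
    t = avgR w (dyadicBox a ℓ k j)}

/-- The dyadic `μ`-maximal function of `f` relative to the box `box a ℓ`. -/
def dyadicMaxMu (μ : Measure ℂ) (a ℓ : ℝ) (f : ℂ → ℝ) (x : ℂ) : ℝ≥0∞ :=
  ⨆ (k : ℕ) (j : ℕ) (_ : j < 2 ^ k) (_ : x ∈ dyadicBox a ℓ k j),
    muAvg μ f (dyadicBox a ℓ k j)

/-- The maximal function over all Carleson boxes. -/
def globalMaxE (w : ℂ → ℝ) (x : ℂ) : ℝ≥0∞ :=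
  ⨆ (b : ℝ) (m : ℝ) (_ : 0 < m) (_ : m ≤ 1) (_ : x ∈ box b m), avgE w (box b m)

/-- A weight in the disc: integrable, and positive a.e. -/
def IsWeight (w : ℂ → ℝ) : Prop :=
  IntegrableOn w unitDisc ∧ ∀ᵐ x ∂(volume.restrict unitDisc), 0 < w x

/-- `w` is a doubling weight with constant `C`:
`w(Q_I) ≤ C ⬝ w(Q_{(1/2)I})` for all arcs `I`. -/
def IsDoublingWeight (w : ℂ → ℝ) (C : ℝ≥0∞) : Prop :=
  ∀ a ℓ : ℝ, 0 < ℓ → ℓ ≤ 1 →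
    wInt w (box a ℓ) ≤ C * wInt w (box (a + ℓ / 4) (ℓ / 2))

/-- A measure `μ` dominates each dyadic child box with constant `C`. -/
def ChildDoubling (μ : Measure ℂ) (C : ℝ≥0∞) : Prop :=
  ∀ a ℓ : ℝ, 0 < ℓ → ℓ ≤ 1 →
    μ (box a ℓ) ≤ C * μ (box a (ℓ / 2)) ∧
    μ (box a ℓ) ≤ C * μ (box (a + ℓ / 2) (ℓ / 2))

/-- The Békollé–Bonami `B_∞` condition with parameters `α`, `β`. -/
def BInfty (w : ℂ → ℝ) (α β : ℝ) : Prop :=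
  ∀ a ℓ : ℝ, 0 < ℓ → ℓ ≤ 1 → ∀ E : Set ℂ, MeasurableSet E → E ⊆ box a ℓ →
    volume E ≤ ENNReal.ofReal α * volume (box a ℓ) →
    wInt w E ≤ ENNReal.ofReal β * wInt w (box a ℓ)

/-- The Fujii–Wilson condition with constant `L`. -/
def FujiiWilson (w : ℂ → ℝ) (L : ℝ) : Prop :=
  ∀ a ℓ : ℝ, 0 < ℓ → ℓ ≤ 1 →
    (∫⁻ x in box a ℓ, globalMaxE ((box a ℓ).indicator w) x) ≤
      ENNReal.ofReal L * wInt w (box a ℓ)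

/-- Condition `(M dw)`: `w({x ∈ Q : w(x) ≥ A⬝M_Q w(x)}) ≤ b⬝w(Q)` for all `Q`. -/
def MdwCond (w : ℂ → ℝ) (A b : ℝ) : Prop :=
  ∀ a ℓ : ℝ, 0 < ℓ → ℓ ≤ 1 →
    wInt w {x ∈ box a ℓ |
        ENNReal.ofReal A * dyadicMaxE a ℓ w x ≤ ENNReal.ofReal (w x)} ≤
      ENNReal.ofReal b * wInt w (box a ℓ)

/-- The reverse Hölder inequality with exponent `p` and constant `C`. -/
def RHI (w : ℂ → ℝ) (p C : ℝ) : Prop :=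
  ∀ a ℓ : ℝ, 0 < ℓ → ℓ ≤ 1 →
    (∫⁻ x in box a ℓ, ENNReal.ofReal (w x) ^ p) / volume (box a ℓ) ≤
      ENNReal.ofReal C * (avgE w (box a ℓ)) ^ p

/-- Condition `(ML^p)` at a single exponent `p`, with constant `C`:
`∫_Q w^p ≤ C ∫_Q (M_Q w)^p` for all Carleson boxes `Q`. -/
def MLp (w : ℂ → ℝ) (p C : ℝ) : Prop :=
  ∀ a ℓ : ℝ, 0 < ℓ → ℓ ≤ 1 →
    (∫⁻ x in box a ℓ, ENNReal.ofReal (w x) ^ p) ≤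
      ENNReal.ofReal C * ∫⁻ x in box a ℓ, dyadicMaxE a ℓ w x ^ p

open Complex in
lemma measurableSet_box (a ℓ : ℝ) (hℓ1 : ℓ ≤ 1) : MeasurableSet (box a ℓ) := by
  have h2π : (0:ℝ) < 2 * Real.pi := by positivity
  have hbox : box a ℓ = {z : ℂ | 1 - ℓ < ‖z‖ ∧ ‖z‖ < 1} ∩
      ⋃ n : ℤ, Complex.arg ⁻¹' {t : ℝ | t / (2 * Real.pi) + n ∈ Set.Ico a (a + ℓ)} := by
    ext z
    simp only [box, Set.mem_setOf_eq, Set.mem_inter_iff, Set.mem_iUnion, Set.mem_preimage]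
    constructor
    · rintro ⟨h1, h2, θ, hθ, hz⟩
      refine ⟨⟨h1, h2⟩, ?_⟩
      have hz0 : (0:ℝ) < ‖z‖ := lt_of_le_of_lt (by linarith) h1
      have harg : Complex.arg z = toIocMod h2π (-Real.pi) (2 * Real.pi * θ) := by
        conv_lhs => rw [hz]
        rw [show (2 * (Real.pi:ℂ) * (θ:ℂ) * Complex.I) =
            ((2 * Real.pi * θ : ℝ) : ℂ) * Complex.I by push_cast; ring]
        rw [Complex.arg_real_mul _ hz0, Complex.arg_exp_mul_I]
      refine ⟨toIocDiv h2π (-Real.pi) (2 * Real.pi * θ), ?_⟩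
      have hmod : toIocMod h2π (-Real.pi) (2 * Real.pi * θ)
          = 2 * Real.pi * θ -
            (toIocDiv h2π (-Real.pi) (2 * Real.pi * θ) : ℝ) * (2 * Real.pi) := by
        rw [toIocMod, zsmul_eq_mul]
      have hθ' : Complex.arg z / (2 * Real.pi) +
          (toIocDiv h2π (-Real.pi) (2 * Real.pi * θ) : ℝ) = θ := by
        rw [harg, hmod]
        field_simp
        ring
      rw [hθ']
      exact hθ
    · rintro ⟨⟨h1, h2⟩, n, hn⟩
      refine ⟨h1, h2, Complex.arg z / (2 * Real.pi) + n, hn, ?_⟩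
      have key : (2 * (Real.pi:ℂ) * ((Complex.arg z / (2 * Real.pi) + (n:ℝ) : ℝ) : ℂ) *
          Complex.I) = (Complex.arg z : ℂ) * Complex.I + (n:ℂ) * (2 * (Real.pi:ℂ) * Complex.I) := by
        have hπ : (Real.pi : ℂ) ≠ 0 := Complex.ofReal_ne_zero.mpr Real.pi_ne_zero
        push_cast
        field_simp
      rw [key, Complex.exp_add, Complex.exp_int_mul_two_pi_mul_I, mul_one,
        Complex.norm_mul_exp_arg_mul_I]
  rw [hbox]
  refine MeasurableSet.inter ?_ (MeasurableSet.iUnion fun n => ?_)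
  · have : {z : ℂ | 1 - ℓ < ‖z‖ ∧ ‖z‖ < 1}
        = (fun z : ℂ => ‖z‖) ⁻¹' (Set.Ioo (1 - ℓ) 1) := rfl
    rw [this]
    exact continuous_norm.measurable measurableSet_Ioo
  · exact Complex.measurable_arg
      (((measurable_id.div_const _).add_const _) measurableSet_Ico)

lemma jensen_aux {α : Type*} [MeasurableSpace α] {μ : MeasureTheory.Measure α}
    {f : α → ℝ≥0∞} (hf : AEMeasurable f μ) {r : ℝ} (hr0 : 0 < r) (hr1 : r ≤ 1) :
    ∫⁻ x, f x ^ r ∂μ ≤ (∫⁻ x, f x ∂μ) ^ r * (μ Set.univ) ^ (1 - r) := by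
  rcases eq_or_lt_of_le hr1 with rfl | hr1
  · simp
  · have hconj : (1/r).HolderConjugate (1/(1-r)) := by
      rw [Real.holderConjugate_iff]; constructor
      · rw [lt_div_iff₀ hr0]; linarith
      · simp only [one_div, inv_inv]; ring
    have H := ENNReal.lintegral_mul_le_Lp_mul_Lq μ hconj
      (f := fun x => f x ^ r) (g := fun _ => (1:ℝ≥0∞)) (hf.pow_const r) aemeasurable_const
    simp only [Pi.mul_apply, mul_one, ENNReal.one_rpow, lintegral_one,
      one_div_one_div] at H
    refine H.trans (le_of_eq ?_)
    congr 2
    refine lintegral_congr fun x => ?_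
    rw [← ENNReal.rpow_mul, mul_one_div_cancel hr0.ne', ENNReal.rpow_one]

/-- If `w ∈ B_{p₀}(𝔻)` with constant `K`, then for all Carleson boxes `Q` and
all `p ≥ p₀`, `∫_Q (1/w)^{1/(p-1)} ≤ K^{1/(p₀-1)} ∫_Q (1/m_Q w)^{1/(p-1)}`. -/

theorem stmt17 (w : ℂ → ℝ) (hw : IsWeight w) (p₀ K : ℝ) (hp₀ : 1 < p₀)
    (hK : 1 ≤ K)
    (hBp : ∀ a ℓ : ℝ, 0 < ℓ → ℓ ≤ 1 →
      avgE w (box a ℓ) *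
        ((∫⁻ x in box a ℓ, (ENNReal.ofReal (w x))⁻¹ ^ (1 / (p₀ - 1))) /
          volume (box a ℓ)) ^ (p₀ - 1) ≤ ENNReal.ofReal K) :
    ∀ a ℓ : ℝ, 0 < ℓ → ℓ ≤ 1 → ∀ p : ℝ, p₀ ≤ p →
      (∫⁻ x in box a ℓ, (ENNReal.ofReal (w x))⁻¹ ^ (1 / (p - 1))) ≤
        ENNReal.ofReal K ^ (1 / (p₀ - 1)) *
          ∫⁻ x in box a ℓ, (dyadicMinE a ℓ w x)⁻¹ ^ (1 / (p - 1)) := by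
  intro a ℓ hℓ hℓ1 p hp
  have hp1 : 1 < p := lt_of_lt_of_le hp₀ hp
  have hp₀1 : (0:ℝ) < p₀ - 1 := by linarith
  have hpp : (0:ℝ) < p - 1 := by linarith
  set s : ℝ := 1 / (p - 1) with hs_def
  set s₀ : ℝ := 1 / (p₀ - 1) with hs₀_def
  have hs : 0 < s := by positivity
  have hs₀ : 0 < s₀ := by positivity
  have hss₀ : s ≤ s₀ := one_div_le_one_div_of_le hp₀1 (by linarith)
  set Q := box a ℓ with hQ
  have hQm : MeasurableSet Q := measurableSet_box a ℓ hℓ1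
  have hQdisc : Q ⊆ unitDisc := fun z hz => hz.2.1
  have hQball : Q ⊆ Metric.ball (0:ℂ) 1 := by
    intro z hz
    simpa [Metric.mem_ball, Complex.dist_eq] using hz.2.1
  have hVlt : volume Q < ⊤ := (measure_mono hQball).trans_lt measure_ball_lt_top
  set Kc := ENNReal.ofReal K with hKc
  have hKc1 : (1:ℝ≥0∞) ≤ Kc := ENNReal.one_le_ofReal.mpr hK
  rcases eq_or_ne (volume Q) 0 with hV0 | hV0
  · have hz : volume.restrict Q = 0 := Measure.restrict_eq_zero.mpr hV0
    have : (∫⁻ x in Q, (ENNReal.ofReal (w x))⁻¹ ^ s) = 0 := by rw [hz]; simp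
    rw [this]
    exact bot_le
  -- minimal function bound on Q
  set A := avgE w Q with hA
  have hmin : ∀ x ∈ Q, dyadicMinE a ℓ w x ≤ A := by
    intro x hx
    have hb : dyadicBox a ℓ 0 0 = Q := by
      simp [dyadicBox, hQ]
    have h00 : x ∈ dyadicBox a ℓ 0 0 := by rw [hb]; exact hx
    have : dyadicMinE a ℓ w x ≤ avgE w (dyadicBox a ℓ 0 0) :=
      iInf_le_of_le 0 <| iInf_le_of_le 0 <| iInf_le_of_le (by norm_num) <| iInf_le _ h00
    rwa [hb] at this
  have hRHS : A⁻¹ ^ s * volume Q ≤ ∫⁻ x in Q, (dyadicMinE a ℓ w x)⁻¹ ^ s := by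
    rw [← setLIntegral_const Q (A⁻¹ ^ s)]
    refine setLIntegral_mono' hQm fun x hx => ?_
    exact ENNReal.rpow_le_rpow (ENNReal.inv_le_inv.mpr (hmin x hx)) hs.le
  have hKs : Kc ^ s ≤ Kc ^ s₀ := ENNReal.rpow_le_rpow_of_exponent_le hKc1 hss₀
  -- case w-integral zero
  rcases eq_or_ne (wInt w Q) 0 with hW0 | hW0
  · have hA0 : A = 0 := by rw [hA, avgE, hW0, ENNReal.zero_div]
    have htop : (∫⁻ x in Q, (dyadicMinE a ℓ w x)⁻¹ ^ s) = ⊤ := by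
      refine top_le_iff.mp ?_
      calc (⊤:ℝ≥0∞) = (⊤:ℝ≥0∞) * volume Q := by rw [ENNReal.top_mul hV0]
        _ = A⁻¹ ^ s * volume Q := by
            rw [hA0, ENNReal.inv_zero, ENNReal.top_rpow_of_pos hs]
        _ ≤ _ := hRHS
    rw [htop]
    rw [ENNReal.mul_top]
    · exact le_top
    · intro h
      rw [ENNReal.rpow_eq_zero_iff] at h
      rcases h with ⟨h1, _⟩ | ⟨h1, _⟩
      · rw [h1] at hKc1; exact (not_le.mpr zero_lt_one) hKc1
      · exact ENNReal.ofReal_ne_top h1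
  -- main case
  have hWlt : wInt w Q < ⊤ := by
    have hint : (∫⁻ x in unitDisc, ENNReal.ofReal (w x)) < ⊤ := hw.1.lintegral_lt_top
    exact lt_of_le_of_lt (lintegral_mono' (Measure.restrict_mono hQdisc le_rfl) le_rfl) hint
  have hA0 : A ≠ 0 := by
    rw [hA, avgE, Ne, ENNReal.div_eq_zero_iff]
    push_neg
    exact ⟨hW0, hVlt.ne⟩
  have hAtop : A ≠ ⊤ := by
    rw [hA, avgE, Ne, ENNReal.div_eq_top]
    push_neg
    exact ⟨fun _ => hV0, fun h => absurd h hWlt.ne⟩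
  set I₀ := ∫⁻ x in Q, (ENNReal.ofReal (w x))⁻¹ ^ s₀ with hI₀
  have hBp' : A * (I₀ / volume Q) ^ (p₀ - 1) ≤ Kc := hBp a ℓ hℓ hℓ1
  have step1 : (I₀ / volume Q) ^ (p₀ - 1) ≤ Kc / A := by
    rw [ENNReal.le_div_iff_mul_le (Or.inl hA0) (Or.inl hAtop)]
    rw [mul_comm]
    exact hBp'
  have step2 : I₀ / volume Q ≤ (Kc / A) ^ s₀ := by
    have := ENNReal.rpow_le_rpow step1 hs₀.le
    rwa [← ENNReal.rpow_mul, mul_one_div_cancel hp₀1.ne', ENNReal.rpow_one] at this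
  have step3 : I₀ ≤ (Kc / A) ^ s₀ * volume Q := by
    rw [← ENNReal.div_le_iff_le_mul (Or.inl hV0) (Or.inl hVlt.ne)]
    exact step2
  -- Jensen
  set r : ℝ := s / s₀ with hr
  have hr0 : 0 < r := by positivity
  have hr1 : r ≤ 1 := (div_le_one hs₀).mpr hss₀
  have hsr : s₀ * r = s := by
    rw [hr]; field_simp
  have hwm : AEMeasurable (fun x => ENNReal.ofReal (w x)) (volume.restrict Q) := by
    have h1 : AEMeasurable w (volume.restrict unitDisc) := hw.1.aemeasurable
    exact ENNReal.measurable_ofReal.comp_aemeasurable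
      (h1.mono_measure (Measure.restrict_mono hQdisc le_rfl))
  have hF : AEMeasurable (fun x => (ENNReal.ofReal (w x))⁻¹ ^ s₀) (volume.restrict Q) :=
    hwm.inv.pow_const s₀
  have hJ : (∫⁻ x in Q, (ENNReal.ofReal (w x))⁻¹ ^ s) ≤ I₀ ^ r * (volume Q) ^ (1 - r) := by
    have heq : ∀ x : ℂ, (ENNReal.ofReal (w x))⁻¹ ^ s
        = ((ENNReal.ofReal (w x))⁻¹ ^ s₀) ^ r := fun x => by
      rw [← ENNReal.rpow_mul, hsr]
    calc (∫⁻ x in Q, (ENNReal.ofReal (w x))⁻¹ ^ s)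
        = ∫⁻ x in Q, ((ENNReal.ofReal (w x))⁻¹ ^ s₀) ^ r := lintegral_congr fun x => heq x
      _ ≤ I₀ ^ r * ((volume.restrict Q) Set.univ) ^ (1 - r) := jensen_aux hF hr0 hr1
      _ = I₀ ^ r * (volume Q) ^ (1 - r) := by rw [Measure.restrict_apply_univ]
  have hVpow : (volume Q) ^ r * (volume Q) ^ (1 - r) = volume Q := by
    rw [← ENNReal.rpow_add _ _ hV0 hVlt.ne]
    norm_num
  have hchain : (∫⁻ x in Q, (ENNReal.ofReal (w x))⁻¹ ^ s) ≤ (Kc / A) ^ s * volume Q := by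
    calc (∫⁻ x in Q, (ENNReal.ofReal (w x))⁻¹ ^ s)
        ≤ I₀ ^ r * (volume Q) ^ (1 - r) := hJ
      _ ≤ ((Kc / A) ^ s₀ * volume Q) ^ r * (volume Q) ^ (1 - r) := by
          gcongr
      _ = (Kc / A) ^ s * ((volume Q) ^ r * (volume Q) ^ (1 - r)) := by
          rw [ENNReal.mul_rpow_of_nonneg _ _ hr0.le, ← ENNReal.rpow_mul, hsr]
          ring
      _ = (Kc / A) ^ s * volume Q := by rw [hVpow]
  have hsplit : (Kc / A) ^ s = Kc ^ s * A⁻¹ ^ s := by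
    rw [div_eq_mul_inv, ENNReal.mul_rpow_of_nonneg _ _ hs.le]
  calc (∫⁻ x in Q, (ENNReal.ofReal (w x))⁻¹ ^ s)
      ≤ (Kc / A) ^ s * volume Q := hchain
    _ = Kc ^ s * (A⁻¹ ^ s * volume Q) := by rw [hsplit, mul_assoc]
    _ ≤ Kc ^ s₀ * (A⁻¹ ^ s * volume Q) := by gcongr
    _ ≤ Kc ^ s₀ * ∫⁻ x in Q, (dyadicMinE a ℓ w x)⁻¹ ^ s := by gcongr
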